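/- Let R be a discrete valuation ring with fraction field K and uniformizer π, let n ∈ ℕ, let I be an index set, and let (M_i)_{i∈I} be a family of R-modules such that for every i ∈ I every torsion element x of M_i (i.e. x with r • x = 0 for some nonzero r ∈ R) satisfies π^n • x = 0. Then the canonical K-linear map (∏_{i∈I} M_i) ⊗_R K → ∏_{i∈I} (M_i ⊗_R K), induced by the projections, is injective. -/

import Mathlib

open TensorProduct

/-- The map `x ↦ x ⊗ 1` from `N` to `N ⊗[R] K`. -/
noncomputable def tensorOneMap' (R K N : Type*) [CommRing R] [CommRing K] [Algebra R K]
    [AddCommGroup N] [Module R N] : N →ₗ[R] N ⊗[R] K :=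
  (TensorProduct.comm R K N).toLinearMap ∘ₗ TensorProduct.mk R K N 1

@[simp] lemma tensorOneMap'_apply (R K N : Type*) [CommRing R] [CommRing K] [Algebra R K]
    [AddCommGroup N] [Module R N] (x : N) : tensorOneMap' R K N x = x ⊗ₜ[R] (1 : K) := rfl

lemma tensorOneMap'_isLocalizedModule (R K N : Type*) [CommRing R] [IsDomain R]
    [Field K] [Algebra R K] [IsFractionRing R K]
    [AddCommGroup N] [Module R N] :
    IsLocalizedModule (nonZeroDivisors R) (tensorOneMap' R K N) := by
  have : IsLocalizedModule (nonZeroDivisors R) (TensorProduct.mk R K N 1) :=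
    (isLocalizedModule_iff_isBaseChange (nonZeroDivisors R) K _).mpr
      (TensorProduct.isBaseChange R N K)
  exact IsLocalizedModule.of_linearEquiv _ _ _

/-- If `x ⊗ 1 = 0` in `N ⊗[R] K` then `x` is a torsion element. -/
lemma torsion_of_tmul_one_eq_zero (R K N : Type*) [CommRing R] [IsDomain R]
    [Field K] [Algebra R K] [IsFractionRing R K]
    [AddCommGroup N] [Module R N] (x : N) (h : x ⊗ₜ[R] (1 : K) = 0) :
    ∃ r : R, r ≠ 0 ∧ r • x = 0 := by
  have := tensorOneMap'_isLocalizedModule R K N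
  obtain ⟨s, hs⟩ := (IsLocalizedModule.eq_zero_iff (nonZeroDivisors R)
    (tensorOneMap' R K N)).mp (by simpa using h)
  exact ⟨s, nonZeroDivisors.coe_ne_zero s, hs⟩

/-- Let `R` be a discrete valuation ring with fraction field `K` and uniformizer `π`,
let `n : ℕ`, and let `(M i)` be a family of `R`-modules such that every torsion element
`x` of each `M i` (i.e. `x` with `r • x = 0` for some nonzero `r : R`) satisfies
`π ^ n • x = 0`. Then the canonical map `(∏ i, M i) ⊗[R] K → ∏ i, (M i ⊗[R] K)`,
induced by the projections, is injective. -/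
theorem prod_tensor_fractionField_injective_of_bounded_torsion
    (R : Type*) [CommRing R] [IsDomain R] [IsDiscreteValuationRing R]
    (K : Type*) [Field K] [Algebra R K] [IsFractionRing R K]
    (π : R) (hπ : Irreducible π) (n : ℕ)
    (ι : Type*) (M : ι → Type*) [∀ i, AddCommGroup (M i)] [∀ i, Module R (M i)]
    (htor : ∀ (i : ι) (x : M i), (∃ r : R, r ≠ 0 ∧ r • x = 0) → π ^ n • x = 0) :
    Function.Injective
      (LinearMap.pi fun i =>
        TensorProduct.map ((LinearMap.proj i : (∀ j, M j) →ₗ[R] M i))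
          (LinearMap.id : K →ₗ[R] K)) := by
  classical
  set F := (LinearMap.pi fun i =>
      TensorProduct.map ((LinearMap.proj i : (∀ j, M j) →ₗ[R] M i))
        (LinearMap.id : K →ₗ[R] K)) with hF
  rw [← LinearMap.ker_eq_bot, LinearMap.ker_eq_bot']
  intro z hz
  have hloc := tensorOneMap'_isLocalizedModule R K (∀ j, M j)
  obtain ⟨⟨x, s⟩, hs⟩ :=
    IsLocalizedModule.surj (nonZeroDivisors R) (tensorOneMap' R K (∀ j, M j)) z
  simp only [tensorOneMap'_apply] at hs
  -- the image of `x ⊗ 1` is zero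
  have h0 : F (x ⊗ₜ[R] (1 : K)) = 0 := by
    rw [← hs, Submonoid.smul_def, map_smul, hz, smul_zero]
  -- hence each component `x i ⊗ 1` is zero
  have hcomp : ∀ i, (x i) ⊗ₜ[R] (1 : K) = 0 := by
    intro i
    have hi := congr_fun h0 i
    simpa [hF, LinearMap.pi_apply] using hi
  -- so each `x i` is torsion, killed by `π ^ n`
  have hx : (π ^ n) • x = 0 := by
    funext i
    have := htor i (x i) (torsion_of_tmul_one_eq_zero R K (M i) (x i) (hcomp i))
    simpa using this
  -- therefore `(π ^ n * s) • z = 0`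
  have ht0 : (π ^ n) • ((s : R) • z) = 0 := by
    rw [← Submonoid.smul_def, hs, smul_tmul', hx, zero_tmul]
  -- conclude since `π ^ n * s` is a nonzerodivisor
  have hmem : π ^ n * (s : R) ∈ nonZeroDivisors R :=
    mul_mem (pow_mem (mem_nonZeroDivisors_of_ne_zero hπ.ne_zero) n) s.2
  refine IsLocalizedModule.smul_injective (tensorOneMap' R K (∀ j, M j))
    (⟨π ^ n * (s : R), hmem⟩ : nonZeroDivisors R) ?_
  show (⟨π ^ n * (s : R), hmem⟩ : nonZeroDivisors R) • z
      = (⟨π ^ n * (s : R), hmem⟩ : nonZeroDivisors R) • (0 : (∀ j, M j) ⊗[R] K)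
  rw [smul_zero, Submonoid.smul_def, mul_smul]
  exact ht0
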